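/- arXiv:1503.08676 — 9 statements merged into one kernel-verified Lean document; each statement's English description precedes it below -/
import Mathlib

section
/- Let τ > 0 and γ > 0. Then the transmissibility τ̃(K) = 1 − (Kγ/(τ + Kγ))^K is strictly increasing in the number of stages: for all positive integers K < K′ one has 1 − (Kγ/(τ + Kγ))^K < 1 − (K′γ/(τ + K′γ))^{K′}. -/
set_option autoImplicit false

/-! With `x = τ / γ` one has `Kγ / (τ + Kγ) = (1 + x / K)⁻¹`, so `τ̃(K) = 1 - 1 / (1 + x / K) ^ K`,
and it suffices that `t ↦ (1 + x / t) ^ t` is strictly increasing on `t > 0`. For `0 < a < b` this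
is the strict Bernoulli inequality `(1 + x / a) ^ (a / b) < 1 + (a / b) (x / a) = 1 + x / b`,
raised to the power `b`. -/

open Real

theorem one_add_div_rpow_self_lt {x a b : ℝ} (hxa : -a ≤ x) (hx : x ≠ 0) (ha : 0 < a)
    (hab : a < b) : (1 + x / a) ^ a < (1 + x / b) ^ b := by
  have hb : 0 < b := ha.trans hab
  have hbase : 0 ≤ 1 + x / a := by
    rw [← div_self ha.ne', ← add_div]; exact div_nonneg (by linarith) ha.le
  have bernoulli : (1 + x / a) ^ (a / b) < 1 + x / b := by
    have h := rpow_one_add_lt_one_add_mul_self (s := x / a)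
      ((le_div_iff₀ ha).2 (by linarith)) (div_ne_zero hx ha.ne') (div_pos ha hb)
      ((div_lt_one hb).2 hab)
    rwa [mul_comm (a / b), div_mul_div_cancel₀ ha.ne'] at h
  calc (1 + x / a) ^ a = ((1 + x / a) ^ (a / b)) ^ b := by
        rw [← rpow_mul hbase, div_mul_cancel₀ _ hb.ne']
    _ < (1 + x / b) ^ b := rpow_lt_rpow (rpow_nonneg hbase _) bernoulli hb

theorem strictMono_one_add_div_pow {x : ℝ} (hx : 0 < x) :
    StrictMono fun n : ℕ => (1 + x / n) ^ n := by
  intro m n hmn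
  rcases Nat.eq_zero_or_pos m with rfl | hm
  · -- `x / 0 = 0`, so the value at `0` is `1`.
    simpa using one_lt_pow₀ (lt_add_of_pos_right 1 (by positivity)) (by omega : n ≠ 0)
  · have h := one_add_div_rpow_self_lt (x := x) (by linarith [(Nat.cast_pos.2 hm : (0 : ℝ) < m)])
      hx.ne' (Nat.cast_pos.2 hm) (Nat.cast_lt.2 hmn)
    simpa only [rpow_natCast] using h

noncomputable def transmissibility (τ γ : ℝ) (K : ℕ) : ℝ :=
  1 - ((K : ℝ) * γ / (τ + (K : ℝ) * γ)) ^ K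

theorem transmissibility_eq (τ : ℝ) {γ : ℝ} (hγ : γ ≠ 0) (K : ℕ) :
    transmissibility τ γ K = 1 - ((1 + τ / γ / K) ^ K)⁻¹ := by
  rcases Nat.eq_zero_or_pos K with rfl | hK
  · simp [transmissibility]
  · have hK' : (K : ℝ) ≠ 0 := Nat.cast_ne_zero.2 hK.ne'
    rw [transmissibility, ← inv_pow]
    congr 2
    field_simp
    ring

theorem strictMono_transmissibility {τ γ : ℝ} (hτ : 0 < τ) (hγ : 0 < γ) :
    StrictMono (transmissibility τ γ) := by
  intro m n hmn
  rw [transmissibility_eq τ hγ.ne', transmissibility_eq τ hγ.ne', sub_lt_sub_iff_left]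
  exact inv_strictAnti₀ (pow_pos (by positivity) m)
    (strictMono_one_add_div_pow (div_pos hτ hγ) hmn)

theorem transmissibility_strictMono_general (τ γ : ℝ) (hτ : 0 < τ) (hγ : 0 < γ)
    (K K' : ℕ) (hKK' : K < K') :
    1 - (((K : ℝ) * γ) / (τ + (K : ℝ) * γ)) ^ K <
      1 - (((K' : ℝ) * γ) / (τ + (K' : ℝ) * γ)) ^ K' :=
  strictMono_transmissibility hτ hγ hKK'

/-- The transmissibility `τ̃(K) = 1 - (Kγ/(τ + Kγ))^K` is strictly increasing in the
number of infectious stages `K`. -/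
theorem transmissibility_strictMono (τ γ : ℝ) (hτ : 0 < τ) (hγ : 0 < γ)
    (K K' : ℕ) (hK : 0 < K) (hKK' : K < K') :
    1 - (((K : ℝ) * γ) / (τ + (K : ℝ) * γ)) ^ K <
      1 - (((K' : ℝ) * γ) / (τ + (K' : ℝ) * γ)) ^ K' :=
  transmissibility_strictMono_general τ γ hτ hγ K K' hKK'
end

section
/- Let τ, γ, n, λ be real numbers and K a positive integer, and write d = Kγ + τ + λ. Let A be the K × K real matrix with entries A₁₁ = τ(n−1) − d, A₁ⱼ = τ(n−1) for 2 ≤ j ≤ K, Aᵢᵢ = −d for 2 ≤ i ≤ K, A_{i+1,i} = Kγ for 1 ≤ i ≤ K−1, and all other entries zero. Then det A = (−1)^K [ d^K − τ(n−1)( d^{K−1} + Σ_{i=1}^{K−1} (Kγ)^{K−i} d^{i−1} ) ]. -/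
/-!
Expand the determinant along the last column. Its only nonzero entries are `τ(n-1)` at the top
and `-d` at the bottom. Deleting the bottom row and last column leaves the same matrix one size
smaller, while deleting the top row and last column leaves an upper triangular matrix with `Kγ`
on its diagonal. Hence `D_{m+1} = -d D_m + (-1)^m τ(n-1) (Kγ)^m`, which is solved by the
two-variable geometric sum `∑ (Kγ)^i d^(m-1-i)`.
-/

set_option autoImplicit false

open Finset

namespace Matrix

variable {R : Type*} [CommRing R] (a b c : R)

def firstRowBidiag (m : ℕ) : Matrix (Fin m) (Fin m) R :=
  of fun i j =>
    if (i : ℕ) = 0 then (if (j : ℕ) = 0 then a - b else a)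
    else if (i : ℕ) = j then -b
    else if (i : ℕ) = j + 1 then c
    else 0

lemma firstRowBidiag_submatrix_last_last (m : ℕ) :
    (firstRowBidiag a b c (m + 1)).submatrix (Fin.last m).succAbove (Fin.last m).succAbove =
      firstRowBidiag a b c m := by
  ext i j
  simp only [firstRowBidiag, Fin.succAbove_last, submatrix_apply, of_apply, Fin.val_castSucc]

lemma det_firstRowBidiag_submatrix_zero_last (m : ℕ) :
    ((firstRowBidiag a b c (m + 1)).submatrix (0 : Fin (m + 1)).succAbove
      (Fin.last m).succAbove).det = c ^ m := by
  rw [det_of_isUpperTriangular]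
  · simp [firstRowBidiag, Fin.succAbove_last]
  · intro i j hji
    have hji' : (j : ℕ) < i := hji
    simp only [firstRowBidiag, Fin.succAbove_last, Fin.succAbove_zero, submatrix_apply, of_apply,
      Fin.val_castSucc, Fin.val_succ]
    rw [if_neg (by omega), if_neg (by omega), if_neg (by omega)]

lemma firstRowBidiag_apply_last_of_ne {m : ℕ} {i : Fin (m + 1)} (h0 : i ≠ 0)
    (hlast : i ≠ Fin.last m) : firstRowBidiag a b c (m + 1) i (Fin.last m) = 0 := by
  have hi0 : (i : ℕ) ≠ 0 := Fin.val_ne_of_ne h0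
  have him : (i : ℕ) ≠ m := Fin.val_ne_of_ne hlast
  simp only [firstRowBidiag, of_apply, Fin.val_last]
  rw [if_neg hi0, if_neg him, if_neg (by omega)]

lemma det_firstRowBidiag_succ_succ (m : ℕ) :
    (firstRowBidiag a b c (m + 2)).det =
      -b * (firstRowBidiag a b c (m + 1)).det + (-1) ^ (m + 1) * a * c ^ (m + 1) := by
  rw [det_succ_column _ (Fin.last (m + 1)),
    Fintype.sum_eq_add 0 (Fin.last (m + 1)) (Fin.ext_iff.not.2 (by simp))
      fun i hi => by rw [firstRowBidiag_apply_last_of_ne a b c hi.1 hi.2, mul_zero, zero_mul],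
    firstRowBidiag_submatrix_last_last, det_firstRowBidiag_submatrix_zero_last]
  simp only [firstRowBidiag, of_apply, Fin.val_zero, Fin.val_last, if_true, zero_add,
    if_neg (Nat.succ_ne_zero m), ← two_mul, pow_mul, neg_one_sq, one_pow]
  ring

theorem det_firstRowBidiag (m : ℕ) :
    (firstRowBidiag a b c (m + 1)).det =
      (-1) ^ (m + 1) * (b ^ (m + 1) - a * ∑ i ∈ range (m + 1), c ^ i * b ^ (m - i)) := by
  induction m with
  | zero => simp [firstRowBidiag]
  | succ m ih =>
    rw [det_firstRowBidiag_succ_succ, ih, geom_sum₂_succ_eq c b (n := m + 1), Nat.add_sub_cancel]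
    ring

end Matrix

theorem geom_sum₂_succ_eq_pow_add_sum_Icc {R : Type*} [CommRing R] (x y : R) (m : ℕ) :
    ∑ i ∈ range (m + 1), x ^ i * y ^ (m - i) =
      y ^ m + ∑ i ∈ Icc 1 m, x ^ (m + 1 - i) * y ^ (i - 1) := by
  have hcomm := geom_sum₂_comm x y (m + 1)
  rw [Nat.add_sub_cancel] at hcomm
  rw [hcomm, sum_range_succ, Nat.sub_self, pow_zero, mul_one, add_comm,
    ← Ico_add_one_right_eq_Icc, sum_Ico_eq_sum_range, Nat.add_sub_cancel]
  congr 1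
  refine sum_congr rfl fun i _ => ?_
  rw [mul_comm, Nat.add_sub_cancel_left, add_comm 1 i, Nat.add_sub_add_right]

theorem pairwise_block_det_general (τ γ n d : ℝ) (K : ℕ) (hK : 0 < K) :
    Matrix.det (fun i j : Fin K =>
        if (i : ℕ) = 0 then (if (j : ℕ) = 0 then τ * (n - 1) - d else τ * (n - 1))
        else if (i : ℕ) = (j : ℕ) then -d
        else if (i : ℕ) = (j : ℕ) + 1 then (K : ℝ) * γ
        else 0) =
      (-1 : ℝ) ^ K *
        (d ^ K - τ * (n - 1) *
          (d ^ (K - 1) + ∑ i ∈ Finset.Icc 1 (K - 1), ((K : ℝ) * γ) ^ (K - i) * d ^ (i - 1))) := by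
  obtain ⟨m, rfl⟩ := Nat.exists_eq_add_one_of_ne_zero hK.ne'
  change (Matrix.firstRowBidiag (τ * (n - 1)) d (((m + 1 : ℕ) : ℝ) * γ) (m + 1)).det = _
  rw [Matrix.det_firstRowBidiag, geom_sum₂_succ_eq_pow_add_sum_Icc, Nat.add_sub_cancel]

/-- Determinant of the nontrivial block of the linearisation of the closed pairwise
SI^K R model about the disease-free equilibrium.  With `d = Kγ + τ + λ`, the `K × K`
matrix with first row `(τ(n-1) - d, τ(n-1), …, τ(n-1))`, diagonal entries `-d` below
the first row, subdiagonal entries `Kγ`, and zeros elsewhere, has determinant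
`(-1)^K [ d^K - τ(n-1)( d^{K-1} + Σ_{i=1}^{K-1} (Kγ)^{K-i} d^{i-1} ) ]`. -/
theorem pairwise_block_det (τ γ n lam d : ℝ) (K : ℕ) (hK : 0 < K)
    (hd : d = (K : ℝ) * γ + τ + lam) :
    Matrix.det (fun i j : Fin K =>
        if (i : ℕ) = 0 then (if (j : ℕ) = 0 then τ * (n - 1) - d else τ * (n - 1))
        else if (i : ℕ) = (j : ℕ) then -d
        else if (i : ℕ) = (j : ℕ) + 1 then (K : ℝ) * γ
        else 0) =
      (-1 : ℝ) ^ K *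
        (d ^ K - τ * (n - 1) *
          (d ^ (K - 1) + ∑ i ∈ Finset.Icc 1 (K - 1), ((K : ℝ) * γ) ^ (K - i) * d ^ (i - 1))) :=
  pairwise_block_det_general τ γ n d K hK
end

section
/- Let τ > 0, γ > 0, n > 1 be real numbers and K a positive integer. Then (τ + Kγ)^K − τ(n−1)[ (τ + Kγ)^{K−1} + Σ_{i=1}^{K−1} (Kγ)^{K−i} (τ + Kγ)^{i−1} ] = (τ + Kγ)^K ( 1 − (n−1)·τ̃ ), where τ̃ = 1 − (Kγ/(τ + Kγ))^K. In particular, λ = 0 is a root of the characteristic factor φ(λ) = (τ+Kγ+λ)^K − τ(n−1)[ (τ+Kγ+λ)^{K−1} + Σ_{i=1}^{K−1} (Kγ)^{K−i} (τ+Kγ+λ)^{i−1} ] if and only if (n−1)·τ̃ = 1. -/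
set_option autoImplicit false

open Finset

/-! Write `a = τ + Kγ` and `b = Kγ`, so that `τ = a - b`. The bracket in `φ(0)` is the
geometric sum `∑_{i<K} aⁱ b^(K-1-i)`, hence `τ` times it telescopes to `a^K - b^K`, and
`a^K - (n-1)(a^K - b^K) = a^K (1 - (n-1)(1 - (b/a)^K))`. -/

theorem pow_add_sum_Icc_eq_geom_sum₂ {R : Type*} [CommSemiring R] (x y : R) {K : ℕ}
    (hK : 0 < K) :
    x ^ (K - 1) + ∑ i ∈ Icc 1 (K - 1), y ^ (K - i) * x ^ (i - 1) =
      ∑ i ∈ range K, x ^ i * y ^ (K - 1 - i) := by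
  obtain ⟨m, rfl⟩ := Nat.exists_eq_add_of_lt hK
  rw [zero_add, Nat.add_sub_cancel, sum_range_succ, Nat.sub_self, pow_zero, mul_one, add_comm,
    ← Ico_add_one_right_eq_Icc, sum_Ico_eq_sum_range, Nat.add_sub_cancel]
  congr 1
  refine sum_congr rfl fun i hi => ?_
  rw [mem_range] at hi
  rw [mul_comm, Nat.add_sub_cancel_left, show m + 1 - (1 + i) = m - i by omega]

theorem sub_mul_pow_add_sum_Icc_eq_pow_sub_pow {R : Type*} [CommRing R] (x y : R) {K : ℕ}
    (hK : 0 < K) :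
    (x - y) * (x ^ (K - 1) + ∑ i ∈ Icc 1 (K - 1), y ^ (K - i) * x ^ (i - 1)) = x ^ K - y ^ K := by
  rw [pow_add_sum_Icc_eq_geom_sum₂ x y hK, mul_comm, geom_sum₂_mul]

theorem pow_sub_sub_mul_pow_add_sum_Icc {F : Type*} [Field F] (x y c : F) {K : ℕ} (hx : x ≠ 0)
    (hK : 0 < K) :
    x ^ K - (x - y) * c * (x ^ (K - 1) + ∑ i ∈ Icc 1 (K - 1), y ^ (K - i) * x ^ (i - 1)) =
      x ^ K * (1 - c * (1 - (y / x) ^ K)) := by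
  rw [mul_right_comm, sub_mul_pow_add_sum_Icc_eq_pow_sub_pow x y hK, div_pow]
  field_simp

theorem characteristic_factor_at_zero_general (τ γ n : ℝ) (hτ : 0 < τ) (hγ : 0 < γ)
    (K : ℕ) (hK : 0 < K) :
    ((τ + (K : ℝ) * γ) ^ K -
        τ * (n - 1) * ((τ + (K : ℝ) * γ) ^ (K - 1) +
          ∑ i ∈ Finset.Icc 1 (K - 1), ((K : ℝ) * γ) ^ (K - i) * (τ + (K : ℝ) * γ) ^ (i - 1)) =
      (τ + (K : ℝ) * γ) ^ K *
        (1 - (n - 1) * (1 - (((K : ℝ) * γ) / (τ + (K : ℝ) * γ)) ^ K))) ∧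
    (((τ + (K : ℝ) * γ + 0) ^ K -
        τ * (n - 1) * ((τ + (K : ℝ) * γ + 0) ^ (K - 1) +
          ∑ i ∈ Finset.Icc 1 (K - 1), ((K : ℝ) * γ) ^ (K - i) * (τ + (K : ℝ) * γ + 0) ^ (i - 1))
        = 0) ↔
      (n - 1) * (1 - (((K : ℝ) * γ) / (τ + (K : ℝ) * γ)) ^ K) = 1) := by
  have hpos : 0 < τ + (K : ℝ) * γ := by positivity
  have key := pow_sub_sub_mul_pow_add_sum_Icc (τ + (K : ℝ) * γ) ((K : ℝ) * γ) (n - 1) hpos.ne' hK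
  rw [add_sub_cancel_right] at key
  refine ⟨key, ?_⟩
  rw [add_zero, key, mul_eq_zero, sub_eq_zero, or_iff_right (pow_pos hpos K).ne']
  exact eq_comm

/-- Evaluating the characteristic factor of the linearised closed pairwise SI^K R model
at `λ = 0` gives `(τ + Kγ)^K (1 - (n-1) τ̃)` with `τ̃ = 1 - (Kγ/(τ + Kγ))^K`; in
particular `λ = 0` is a root of the characteristic factor `φ` iff `(n-1) τ̃ = 1`. -/
theorem characteristic_factor_at_zero (τ γ n : ℝ) (hτ : 0 < τ) (hγ : 0 < γ) (hn : 1 < n)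
    (K : ℕ) (hK : 0 < K) :
    ((τ + (K : ℝ) * γ) ^ K -
        τ * (n - 1) * ((τ + (K : ℝ) * γ) ^ (K - 1) +
          ∑ i ∈ Finset.Icc 1 (K - 1), ((K : ℝ) * γ) ^ (K - i) * (τ + (K : ℝ) * γ) ^ (i - 1)) =
      (τ + (K : ℝ) * γ) ^ K *
        (1 - (n - 1) * (1 - (((K : ℝ) * γ) / (τ + (K : ℝ) * γ)) ^ K))) ∧
    (((τ + (K : ℝ) * γ + 0) ^ K -
        τ * (n - 1) * ((τ + (K : ℝ) * γ + 0) ^ (K - 1) +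
          ∑ i ∈ Finset.Icc 1 (K - 1), ((K : ℝ) * γ) ^ (K - i) * (τ + (K : ℝ) * γ + 0) ^ (i - 1))
        = 0) ↔
      (n - 1) * (1 - (((K : ℝ) * γ) / (τ + (K : ℝ) * γ)) ^ K) = 1) :=
  characteristic_factor_at_zero_general τ γ n hτ hγ K hK
end

section
/- Let τ > 0, γ > 0, n > 1 be real numbers and K a positive integer, and define φ(λ) = (τ+Kγ+λ)^K − τ(n−1)[ (τ+Kγ+λ)^{K−1} + Σ_{i=1}^{K−1} (Kγ)^{K−i} (τ+Kγ+λ)^{i−1} ]. If (n−1)(1 − (Kγ/(τ+Kγ))^K) > 1, then there exists λ > 0 with φ(λ) = 0; that is, the characteristic equation of the linearised pairwise model has a positive real root, so the disease-free equilibrium is unstable and an epidemic outbreak occurs. -/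
set_option autoImplicit false

open Finset

/-!
With `y = Kγ`, `c = τ(n-1)` and `x = τ + Kγ + λ`, the bracket in `φ` is the homogeneous
geometric sum `∑_{i<K} x^i y^(K-1-i)`, so `(x - y) φ = (x - y - c) x^K + c y^K`.
At `λ = 0` (where `x - y = τ`) the threshold condition `R > 1` makes this negative, while at
`λ = c` it equals `τ x^K + c y^K > 0`; the intermediate value theorem gives a root in `(0, c)`.
-/

theorem pow_sub_one_add_sum_Icc_eq_geom_sum {R : Type*} [CommSemiring R] {K : ℕ} (hK : 0 < K)
    (x y : R) :
    x ^ (K - 1) + ∑ i ∈ Icc 1 (K - 1), y ^ (K - i) * x ^ (i - 1) =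
      ∑ i ∈ range K, x ^ i * y ^ (K - 1 - i) := by
  obtain ⟨m, rfl⟩ : ∃ m, K = m + 1 := ⟨K - 1, by omega⟩
  rw [sum_range_succ, ← Ico_add_one_right_eq_Icc, sum_Ico_eq_sum_range]
  simp only [Nat.add_sub_cancel, Nat.sub_self, pow_zero, mul_one]
  rw [add_comm]
  congr 1
  refine sum_congr rfl fun i _ => ?_
  rw [show m + 1 - (1 + i) = m - i by omega, show 1 + i - 1 = i by omega, mul_comm]

theorem sub_mul_pow_sub_mul_geom_sum {R : Type*} [CommRing R] (c x y : R) (K : ℕ) :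
    (x - y) * (x ^ K - c * ∑ i ∈ range K, x ^ i * y ^ (K - 1 - i)) =
      (x - y - c) * x ^ K + c * y ^ K := by
  linear_combination (-c) * geom_sum₂_mul x y K

theorem pow_lt_mul_pow_sub_pow {a b r : ℝ} (ha : 0 < a) (K : ℕ) (h : 1 < r * (1 - (b / a) ^ K)) :
    a ^ K < r * (a ^ K - b ^ K) := by
  have haK : 0 < a ^ K := pow_pos ha K
  rwa [div_pow, one_sub_div haK.ne', mul_div_assoc', one_lt_div haK] at h

/-- If the threshold parameter `R = (n-1)(1 - (Kγ/(τ+Kγ))^K)` exceeds one, then the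
characteristic factor `φ` of the linearised closed pairwise SI^K R model has a positive
real root, so the disease-free equilibrium is unstable. -/
theorem outbreak_positive_root (τ γ n : ℝ) (hτ : 0 < τ) (hγ : 0 < γ) (hn : 1 < n)
    (K : ℕ) (hK : 0 < K)
    (hR : (n - 1) * (1 - (((K : ℝ) * γ) / (τ + (K : ℝ) * γ)) ^ K) > 1) :
    ∃ lam : ℝ, 0 < lam ∧
      (τ + (K : ℝ) * γ + lam) ^ K -
        τ * (n - 1) * ((τ + (K : ℝ) * γ + lam) ^ (K - 1) +
          ∑ i ∈ Finset.Icc 1 (K - 1),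
            ((K : ℝ) * γ) ^ (K - i) * (τ + (K : ℝ) * γ + lam) ^ (i - 1)) = 0 := by
  set y : ℝ := K * γ
  set c : ℝ := τ * (n - 1)
  have hy : 0 < y := by positivity
  have hc : 0 < c := mul_pos hτ (by linarith)
  set φ : ℝ → ℝ := fun lam =>
    (τ + y + lam) ^ K - c * ∑ i ∈ range K, (τ + y + lam) ^ i * y ^ (K - 1 - i)
  have hφ (lam : ℝ) : (τ + lam) * φ lam = (τ + lam - c) * (τ + y + lam) ^ K + c * y ^ K := by
    have h := sub_mul_pow_sub_mul_geom_sum c (τ + y + lam) y K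
    rwa [show τ + y + lam - y = τ + lam by ring] at h
  have hφ_zero : φ 0 < 0 := by
    have hthreshold := pow_lt_mul_pow_sub_pow (by positivity : 0 < τ + y) K hR
    have h := hφ 0
    simp only [add_zero] at h
    refine neg_of_mul_neg_right (a := τ) ?_ hτ.le
    rw [h]
    nlinarith
  have hφ_c : 0 < φ c := by
    refine pos_of_mul_pos_right (a := τ + c) ?_ (by positivity)
    rw [hφ c, add_sub_cancel_right]
    positivity
  obtain ⟨lam, ⟨hlam, -⟩, hroot⟩ :=
    intermediate_value_Ioo hc.le (by fun_prop : Continuous φ).continuousOn ⟨hφ_zero, hφ_c⟩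
  exact ⟨lam, hlam, by rw [pow_sub_one_add_sum_Icc_eq_geom_sum hK]; exact hroot⟩
end

section
/- Let τ > 0, n > 1, N > 0 be real numbers, let W : [0,∞) → ℝ be continuous, and let S, SS : [0,∞) → ℝ be differentiable with S(t) > 0 for all t ≥ 0, satisfying S′(t) = −W(t) and SS′(t) = −2·((n−1)/n)·SS(t)·W(t)/S(t) for all t ≥ 0, with S(0) = N and SS(0) = n·N. Then for all t ≥ 0, SS(t)/S(t) = n·(S(t)/N)^{(n−2)/n}; equivalently, SS(t) = n·S(t)^{2a}/N^{a−1/n} where a = (n−1)/n. In particular, if S(t) → S_∞ and SS(t) → SS_∞ as t → ∞, then SS_∞ = n·S_∞^{2a}/N^{a−1/n}. -/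
set_option autoImplicit false

open Filter Set

/-!
Along a solution, `d(log SS) = 2a · d(log S)`, so `SS · S^(-2a)` is a first integral of the
pairwise closure. Evaluating it at `t = 0` gives `SS = nN (S/N)^(2a)`, and both closed forms
follow because `2a - 1 = (n - 2)/n = a - 1/n`; the relation between the limits is inherited by
continuity of `x ↦ x^(2a)` on `[0, ∞)`, as `2a > 0`.
-/

theorem hasDerivWithinAt_mul_rpow_neg_of_logDeriv_eq {f g : ℝ → ℝ} {f' c x : ℝ} {s : Set ℝ}
    (hfx : 0 < f x) (hf : HasDerivWithinAt f f' s x)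
    (hg : HasDerivWithinAt g (c * g x * f' / f x) s x) :
    HasDerivWithinAt (fun t => g t * f t ^ (-c)) 0 s x := by
  refine (hg.mul (hf.rpow_const (p := -c) (Or.inl hfx.ne'))).congr_deriv ?_
  rw [Real.rpow_sub_one hfx.ne']
  field_simp
  ring

theorem eq_mul_div_rpow_of_logDeriv_eq {f g f' : ℝ → ℝ} {c x₀ : ℝ}
    (hf_pos : ∀ t ≥ x₀, 0 < f t)
    (hf : ∀ t ≥ x₀, HasDerivWithinAt f (f' t) (Ici x₀) t)
    (hg : ∀ t ≥ x₀, HasDerivWithinAt g (c * g t * f' t / f t) (Ici x₀) t) :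
    ∀ t ≥ x₀, g t = g x₀ * (f t / f x₀) ^ c := by
  intro t ht
  have hconst : g t * f t ^ (-c) = g x₀ * f x₀ ^ (-c) := by
    refine constant_of_has_deriv_right_zero (f := fun t => g t * f t ^ (-c))
      (fun y hy => ?_) (fun y hy => ?_) t ⟨ht, le_rfl⟩
    · exact ((hg y hy.1).mul ((hf y hy.1).rpow_const (Or.inl (hf_pos y hy.1).ne'))
        ).continuousWithinAt.mono Icc_subset_Ici_self
    · exact (hasDerivWithinAt_mul_rpow_neg_of_logDeriv_eq (hf_pos y hy.1) (hf y hy.1)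
        (hg y hy.1)).mono (Ici_subset_Ici.2 hy.1)
  have hft := hf_pos t ht
  have hf₀ := hf_pos x₀ le_rfl
  rw [Real.rpow_neg hft.le, Real.rpow_neg hf₀.le] at hconst
  rw [Real.div_rpow hft.le hf₀.le]
  have : 0 < f t ^ c := Real.rpow_pos_of_pos hft c
  have : 0 < f x₀ ^ c := Real.rpow_pos_of_pos hf₀ c
  field_simp at hconst ⊢
  linarith

theorem pairwise_SS_relation_general (n N a : ℝ) (hn : 1 < n) (hN : 0 < N)
    (ha : a = (n - 1) / n)
    (W S SS : ℝ → ℝ)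
    (hSpos : ∀ t ≥ (0 : ℝ), 0 < S t)
    (hS : ∀ t ≥ (0 : ℝ), HasDerivWithinAt S (-(W t)) (Set.Ici 0) t)
    (hSS : ∀ t ≥ (0 : ℝ),
      HasDerivWithinAt SS (-(2 * ((n - 1) / n) * SS t * W t / S t)) (Set.Ici 0) t)
    (hS0 : S 0 = N) (hSS0 : SS 0 = n * N) :
    (∀ t ≥ (0 : ℝ), SS t / S t = n * (S t / N) ^ ((n - 2) / n)) ∧
    (∀ t ≥ (0 : ℝ), SS t = n * S t ^ (2 * a) / N ^ (a - 1 / n)) ∧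
    (∀ Sinf SSinf : ℝ, Tendsto S atTop (nhds Sinf) → Tendsto SS atTop (nhds SSinf) →
      SSinf = n * Sinf ^ (2 * a) / N ^ (a - 1 / n)) := by
  have hn₀ : 0 < n := one_pos.trans hn
  have hSS_sol : ∀ t ≥ (0 : ℝ), SS t = n * N * (S t / N) ^ (2 * a) := by
    have hSS' : ∀ t ≥ (0 : ℝ), HasDerivWithinAt SS (2 * a * SS t * -(W t) / S t) (Ici 0) t :=
      fun t ht => (hSS t ht).congr_deriv (by rw [ha]; ring)
    simpa only [hS0, hSS0] using eq_mul_div_rpow_of_logDeriv_eq hSpos hS hSS'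
  have hexp : 2 * a = (n - 2) / n + 1 := by rw [ha]; field_simp; ring
  have hexp' : a - 1 / n = (n - 2) / n := by rw [ha]; field_simp; ring
  have hclosed : ∀ t ≥ (0 : ℝ), SS t = n * S t ^ (2 * a) / N ^ (a - 1 / n) := by
    intro t ht
    rw [hSS_sol t ht, Real.div_rpow (hSpos t ht).le hN.le, hexp', hexp,
      Real.rpow_add_one hN.ne']
    field_simp
  refine ⟨fun t ht => ?_, hclosed, fun Sinf SSinf hS_lim hSS_lim => ?_⟩
  · have hSt := hSpos t ht
    rw [hSS_sol t ht, hexp, Real.rpow_add_one (div_pos hSt hN).ne']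
    field_simp
  · have h2a : 0 ≤ 2 * a := by
      rw [ha]; exact mul_nonneg zero_le_two (div_nonneg (by linarith) hn₀.le)
    have hrhs : Tendsto (fun t => n * S t ^ (2 * a) / N ^ (a - 1 / n)) atTop
        (nhds (n * Sinf ^ (2 * a) / N ^ (a - 1 / n))) :=
      (((Real.continuousAt_rpow_const Sinf _ (Or.inr h2a)).tendsto.comp hS_lim).const_mul
        n).div_const _
    exact tendsto_nhds_unique
      (hSS_lim.congr' ((eventually_ge_atTop 0).mono hclosed)) hrhs

/-- Conservation law for the pairwise model: if `S' = -W` and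
`SS' = -2((n-1)/n)·SS·W/S` on `[0,∞)` with `S(0) = N` and `SS(0) = nN`, then
`SS/S = n (S/N)^{(n-2)/n}` for all times, equivalently `SS = n S^{2a}/N^{a-1/n}` with
`a = (n-1)/n`; in particular the same relation holds for the limits as `t → ∞`. -/
theorem pairwise_SS_relation (τ n N a : ℝ) (hτ : 0 < τ) (hn : 1 < n) (hN : 0 < N)
    (ha : a = (n - 1) / n)
    (W S SS : ℝ → ℝ)
    (hW : ContinuousOn W (Set.Ici 0))
    (hSpos : ∀ t ≥ (0 : ℝ), 0 < S t)
    (hS : ∀ t ≥ (0 : ℝ), HasDerivWithinAt S (-(W t)) (Set.Ici 0) t)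
    (hSS : ∀ t ≥ (0 : ℝ),
      HasDerivWithinAt SS (-(2 * ((n - 1) / n) * SS t * W t / S t)) (Set.Ici 0) t)
    (hS0 : S 0 = N) (hSS0 : SS 0 = n * N) :
    (∀ t ≥ (0 : ℝ), SS t / S t = n * (S t / N) ^ ((n - 2) / n)) ∧
    (∀ t ≥ (0 : ℝ), SS t = n * S t ^ (2 * a) / N ^ (a - 1 / n)) ∧
    (∀ Sinf SSinf : ℝ, Tendsto S atTop (nhds Sinf) → Tendsto SS atTop (nhds SSinf) →
      SSinf = n * Sinf ^ (2 * a) / N ^ (a - 1 / n)) :=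
  pairwise_SS_relation_general n N a hn hN ha W S SS hSpos hS hSS hS0 hSS0
end

section
/- Consider the closed pairwise SI^KR model with parameters τ, γ > 0, integer K ≥ 1, real n > 1, a = (n−1)/n, given by differentiable functions S, SS, SI₁, …, SI_K : [0,∞) → ℝ with S(t) > 0 satisfying S′ = −τ Σᵢ SIᵢ, SS′ = −2τa·SS·(Σᵢ SIᵢ)/S, SI₁′ = −(τ+Kγ)SI₁ + τa(SS − SI₁)(Σᵢ SIᵢ)/S, and SIⱼ′ = −(τ+Kγ)SIⱼ + Kγ·SI_{j−1} − τa·SIⱼ·(Σᵢ SIᵢ)/S for j = 2, …, K. Then the scaled variables Pᵢ(t) = SIᵢ(t)/S(t)^a satisfy, for all t ≥ 0, P₁′ = −(τ+Kγ)P₁ + aτ·(SS/S)·F and Pⱼ′ = −(τ+Kγ)Pⱼ + Kγ·P_{j−1} for j = 2, …, K, where F(t) = (Σᵢ SIᵢ(t))/S(t)^a. -/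
set_option autoImplicit false

/-! Dividing by `S^a` is an integrating factor: since `S' = -τ Σᵢ SIᵢ`, the derivative of `S^{-a}`
contributes `+τa·SIⱼ·(Σᵢ SIᵢ)/S` to `(SIⱼ/S^a)'`, which cancels exactly the loss term
`-τa·SIⱼ·(Σᵢ SIᵢ)/S` in each equation for `SIⱼ`. -/

theorem HasDerivWithinAt.div_rpow_const {S X : ℝ → ℝ} {s : Set ℝ} {t a s' x' : ℝ}
    (hX : HasDerivWithinAt X x' s t) (hSt : 0 < S t) (hS : HasDerivWithinAt S s' s t) :
    HasDerivWithinAt (fun u => X u / S u ^ a) ((x' - a * X t * s' / S t) / S t ^ a) s t := by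
  have hSa : 0 < S t ^ a := Real.rpow_pos_of_pos hSt a
  refine (hX.div (hS.rpow_const (Or.inl hSt.ne')) hSa.ne').congr_deriv ?_
  rw [Real.rpow_sub_one hSt.ne']
  field_simp

theorem HasDerivWithinAt.div_rpow_const_of_cancel {S X : ℝ → ℝ} {s : Set ℝ} {t a σ L : ℝ}
    (hX : HasDerivWithinAt X (L - a * σ * X t / S t) s t) (hSt : 0 < S t)
    (hS : HasDerivWithinAt S (-σ) s t) :
    HasDerivWithinAt (fun u => X u / S u ^ a) (L / S t ^ a) s t := by
  convert hX.div_rpow_const hSt hS using 2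
  ring

theorem pairwise_scaled_variables_general (τ γ a : ℝ) (K : ℕ)
    (S SS : ℝ → ℝ) (SI : ℕ → ℝ → ℝ)
    (hSpos : ∀ t ≥ (0 : ℝ), 0 < S t)
    (hS : ∀ t ≥ (0 : ℝ),
      HasDerivWithinAt S (-(τ * ∑ i ∈ Finset.Icc 1 K, SI i t)) (Set.Ici 0) t)
    (hSI1 : ∀ t ≥ (0 : ℝ),
      HasDerivWithinAt (SI 1)
        (-(τ + (K : ℝ) * γ) * SI 1 t +
          τ * a * (SS t - SI 1 t) * (∑ i ∈ Finset.Icc 1 K, SI i t) / S t) (Set.Ici 0) t)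
    (hSIj : ∀ j, 2 ≤ j → j ≤ K → ∀ t ≥ (0 : ℝ),
      HasDerivWithinAt (SI j)
        (-(τ + (K : ℝ) * γ) * SI j t + (K : ℝ) * γ * SI (j - 1) t -
          τ * a * SI j t * (∑ i ∈ Finset.Icc 1 K, SI i t) / S t) (Set.Ici 0) t) :
    (∀ t ≥ (0 : ℝ),
      HasDerivWithinAt (fun u => SI 1 u / S u ^ a)
        (-(τ + (K : ℝ) * γ) * (SI 1 t / S t ^ a) +
          a * τ * (SS t / S t) * ((∑ i ∈ Finset.Icc 1 K, SI i t) / S t ^ a))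
        (Set.Ici 0) t) ∧
    (∀ j, 2 ≤ j → j ≤ K → ∀ t ≥ (0 : ℝ),
      HasDerivWithinAt (fun u => SI j u / S u ^ a)
        (-(τ + (K : ℝ) * γ) * (SI j t / S t ^ a) +
          (K : ℝ) * γ * (SI (j - 1) t / S t ^ a))
        (Set.Ici 0) t) := by
  set I : ℝ → ℝ := fun t => ∑ i ∈ Finset.Icc 1 K, SI i t
  constructor
  · intro t ht
    have hSI1' : HasDerivWithinAt (SI 1)
        ((-(τ + K * γ) * SI 1 t + τ * a * SS t * I t / S t) - a * (τ * I t) * SI 1 t / S t)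
        (Set.Ici 0) t :=
      (hSI1 t ht).congr_deriv (by ring)
    convert hSI1'.div_rpow_const_of_cancel (hSpos t ht) (hS t ht) using 1
    ring
  · intro j hj2 hjK t ht
    have hSIj' : HasDerivWithinAt (SI j)
        ((-(τ + K * γ) * SI j t + K * γ * SI (j - 1) t) - a * (τ * I t) * SI j t / S t)
        (Set.Ici 0) t :=
      (hSIj j hj2 hjK t ht).congr_deriv (by ring)
    convert hSIj'.div_rpow_const_of_cancel (hSpos t ht) (hS t ht) using 1
    ring

/-- In the closed pairwise SI^K R model, the scaled variables `Pᵢ = SIᵢ / S^a` satisfy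
`P₁' = -(τ+Kγ)P₁ + aτ(SS/S)F` and `Pⱼ' = -(τ+Kγ)Pⱼ + Kγ P_{j-1}` for `j = 2, …, K`,
where `F = (Σᵢ SIᵢ)/S^a`. -/
theorem pairwise_scaled_variables (τ γ n a : ℝ) (hτ : 0 < τ) (hγ : 0 < γ) (hn : 1 < n)
    (ha : a = (n - 1) / n) (K : ℕ) (hK : 1 ≤ K)
    (S SS : ℝ → ℝ) (SI : ℕ → ℝ → ℝ)
    (hSpos : ∀ t ≥ (0 : ℝ), 0 < S t)
    (hS : ∀ t ≥ (0 : ℝ),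
      HasDerivWithinAt S (-(τ * ∑ i ∈ Finset.Icc 1 K, SI i t)) (Set.Ici 0) t)
    (hSS : ∀ t ≥ (0 : ℝ),
      HasDerivWithinAt SS
        (-(2 * τ * a * SS t * (∑ i ∈ Finset.Icc 1 K, SI i t) / S t)) (Set.Ici 0) t)
    (hSI1 : ∀ t ≥ (0 : ℝ),
      HasDerivWithinAt (SI 1)
        (-(τ + (K : ℝ) * γ) * SI 1 t +
          τ * a * (SS t - SI 1 t) * (∑ i ∈ Finset.Icc 1 K, SI i t) / S t) (Set.Ici 0) t)
    (hSIj : ∀ j, 2 ≤ j → j ≤ K → ∀ t ≥ (0 : ℝ),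
      HasDerivWithinAt (SI j)
        (-(τ + (K : ℝ) * γ) * SI j t + (K : ℝ) * γ * SI (j - 1) t -
          τ * a * SI j t * (∑ i ∈ Finset.Icc 1 K, SI i t) / S t) (Set.Ici 0) t) :
    (∀ t ≥ (0 : ℝ),
      HasDerivWithinAt (fun u => SI 1 u / S u ^ a)
        (-(τ + (K : ℝ) * γ) * (SI 1 t / S t ^ a) +
          a * τ * (SS t / S t) * ((∑ i ∈ Finset.Icc 1 K, SI i t) / S t ^ a))
        (Set.Ici 0) t) ∧
    (∀ j, 2 ≤ j → j ≤ K → ∀ t ≥ (0 : ℝ),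
      HasDerivWithinAt (fun u => SI j u / S u ^ a)
        (-(τ + (K : ℝ) * γ) * (SI j t / S t ^ a) +
          (K : ℝ) * γ * (SI (j - 1) t / S t ^ a))
        (Set.Ici 0) t) :=
  pairwise_scaled_variables_general τ γ a K S SS SI hSpos hS hSI1 hSIj
end

section
/- Consider the closed pairwise SI^KR model with parameters τ, γ > 0, integer K ≥ 1, real n > 1, a = (n−1)/n, given by differentiable functions S, SS, SI₁, …, SI_K : [0,∞) → ℝ with S(t) > 0 satisfying S′ = −τ Σᵢ SIᵢ, SS′ = −2τa·SS·(Σᵢ SIᵢ)/S, SI₁′ = −(τ+Kγ)SI₁ + τa(SS − SI₁)(Σᵢ SIᵢ)/S, and SIⱼ′ = −(τ+Kγ)SIⱼ + Kγ·SI_{j−1} − τa·SIⱼ·(Σᵢ SIᵢ)/S for j = 2, …, K. Suppose additionally that SR : [0,∞) → ℝ is differentiable with SR′ = −τa·SR·(Σᵢ SIᵢ)/S + Kγ·SI_K. Then F(t) = (Σᵢ SIᵢ(t))/S(t)^a and G(t) = SR(t)/S(t)^a satisfy, for all t ≥ 0, F′ = −τF − Kγ·P_K + aτ·(SS/S)·F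 and G′ = Kγ·P_K, where P_K(t) = SI_K(t)/S(t)^a. -/
set_option autoImplicit false

open Finset Set

/-!
Summing the stage equations, the transitions between consecutive stages telescope, so the total
`I = Σᵢ SIᵢ` only loses mass at rate `τ + τaI/S` and through the exit `KγSI_K` of the last stage.
Since `(S^a)'/S^a = -aτI/S`, dividing by `S^a` removes exactly the loss terms `-τa·X·I/S` from the
equations for `I` and for `SR`.
-/

theorem hasDerivWithinAt_sum_chain {x : ℕ → ℝ → ℝ} {c κ q t : ℝ} {s : Set ℝ} {K : ℕ}
    (hK : 1 ≤ K) (h₁ : HasDerivWithinAt (x 1) (-(c + κ) * x 1 t + q) s t)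
    (hstep : ∀ j, 2 ≤ j → j ≤ K →
      HasDerivWithinAt (x j) (-(c + κ) * x j t + κ * x (j - 1) t) s t) :
    HasDerivWithinAt (fun u => ∑ i ∈ Icc 1 K, x i u)
      (-c * ∑ i ∈ Icc 1 K, x i t - κ * x K t + q) s t := by
  induction K, hK using Nat.le_induction with
  | base => simpa using h₁.congr_deriv (by ring)
  | succ K hK ih =>
    have hsum := (ih fun j hj₂ hjK => hstep j hj₂ (by omega)).add
      (hstep (K + 1) (by omega) le_rfl)
    rw [Nat.add_sub_cancel] at hsum
    simp only [sum_Icc_succ_top (show 1 ≤ K + 1 by omega)]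
    exact hsum.congr_deriv (by ring)

theorem HasDerivWithinAt.div_rpow_const_s11 {f g : ℝ → ℝ} {f' g' a t : ℝ} {s : Set ℝ}
    (hf : HasDerivWithinAt f f' s t) (hg : HasDerivWithinAt g g' s t) (hpos : 0 < g t) :
    HasDerivWithinAt (fun u => f u / g u ^ a) ((f' - a * f t * g' / g t) / g t ^ a) s t := by
  have hga : g t ^ a ≠ 0 := (Real.rpow_pos_of_pos hpos a).ne'
  refine (hf.div (hg.rpow_const (Or.inl hpos.ne')) hga).congr_deriv ?_
  rw [Real.rpow_sub_one hpos.ne']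
  field_simp

theorem pairwise_F_G_equations_general (τ γ a : ℝ) (K : ℕ) (hK : 1 ≤ K)
    (S SS SR : ℝ → ℝ) (SI : ℕ → ℝ → ℝ)
    (hSpos : ∀ t ≥ (0 : ℝ), 0 < S t)
    (hS : ∀ t ≥ (0 : ℝ),
      HasDerivWithinAt S (-(τ * ∑ i ∈ Finset.Icc 1 K, SI i t)) (Set.Ici 0) t)
    (hSI1 : ∀ t ≥ (0 : ℝ),
      HasDerivWithinAt (SI 1)
        (-(τ + (K : ℝ) * γ) * SI 1 t +
          τ * a * (SS t - SI 1 t) * (∑ i ∈ Finset.Icc 1 K, SI i t) / S t) (Set.Ici 0) t)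
    (hSIj : ∀ j, 2 ≤ j → j ≤ K → ∀ t ≥ (0 : ℝ),
      HasDerivWithinAt (SI j)
        (-(τ + (K : ℝ) * γ) * SI j t + (K : ℝ) * γ * SI (j - 1) t -
          τ * a * SI j t * (∑ i ∈ Finset.Icc 1 K, SI i t) / S t) (Set.Ici 0) t)
    (hSR : ∀ t ≥ (0 : ℝ),
      HasDerivWithinAt SR
        (-(τ * a * SR t * (∑ i ∈ Finset.Icc 1 K, SI i t) / S t) + (K : ℝ) * γ * SI K t)
        (Set.Ici 0) t) :
    (∀ t ≥ (0 : ℝ),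
      HasDerivWithinAt (fun u => (∑ i ∈ Finset.Icc 1 K, SI i u) / S u ^ a)
        (-τ * ((∑ i ∈ Finset.Icc 1 K, SI i t) / S t ^ a) -
          (K : ℝ) * γ * (SI K t / S t ^ a) +
          a * τ * (SS t / S t) * ((∑ i ∈ Finset.Icc 1 K, SI i t) / S t ^ a))
        (Set.Ici 0) t) ∧
    (∀ t ≥ (0 : ℝ),
      HasDerivWithinAt (fun u => SR u / S u ^ a)
        ((K : ℝ) * γ * (SI K t / S t ^ a)) (Set.Ici 0) t) := by
  refine ⟨fun t ht => ?_, fun t ht => ?_⟩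
  · set I := ∑ i ∈ Icc 1 K, SI i t
    have hI : HasDerivWithinAt (fun u => ∑ i ∈ Icc 1 K, SI i u)
        (-(τ + τ * a * I / S t) * I - K * γ * SI K t + τ * a * I / S t * SS t) (Ici 0) t :=
      hasDerivWithinAt_sum_chain hK ((hSI1 t ht).congr_deriv (by ring))
        fun j hj₂ hjK => (hSIj j hj₂ hjK t ht).congr_deriv (by ring)
    refine (hI.div_rpow_const_s11 (hS t ht) (hSpos t ht)).congr_deriv ?_
    have hS₀ := (hSpos t ht).ne'
    field_simp
    ring
  · refine ((hSR t ht).div_rpow_const_s11 (hS t ht) (hSpos t ht)).congr_deriv ?_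
    have hS₀ := (hSpos t ht).ne'
    field_simp
    ring

/-- In the closed pairwise SI^K R model with an SR-pair equation, the scaled variables
`F = (Σᵢ SIᵢ)/S^a` and `G = SR/S^a` satisfy `F' = -τF - Kγ P_K + aτ(SS/S)F` and
`G' = Kγ P_K`, where `P_K = SI_K / S^a`. -/
theorem pairwise_F_G_equations (τ γ n a : ℝ) (hτ : 0 < τ) (hγ : 0 < γ) (hn : 1 < n)
    (ha : a = (n - 1) / n) (K : ℕ) (hK : 1 ≤ K)
    (S SS SR : ℝ → ℝ) (SI : ℕ → ℝ → ℝ)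
    (hSpos : ∀ t ≥ (0 : ℝ), 0 < S t)
    (hS : ∀ t ≥ (0 : ℝ),
      HasDerivWithinAt S (-(τ * ∑ i ∈ Finset.Icc 1 K, SI i t)) (Set.Ici 0) t)
    (hSS : ∀ t ≥ (0 : ℝ),
      HasDerivWithinAt SS
        (-(2 * τ * a * SS t * (∑ i ∈ Finset.Icc 1 K, SI i t) / S t)) (Set.Ici 0) t)
    (hSI1 : ∀ t ≥ (0 : ℝ),
      HasDerivWithinAt (SI 1)
        (-(τ + (K : ℝ) * γ) * SI 1 t +
          τ * a * (SS t - SI 1 t) * (∑ i ∈ Finset.Icc 1 K, SI i t) / S t) (Set.Ici 0) t)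
    (hSIj : ∀ j, 2 ≤ j → j ≤ K → ∀ t ≥ (0 : ℝ),
      HasDerivWithinAt (SI j)
        (-(τ + (K : ℝ) * γ) * SI j t + (K : ℝ) * γ * SI (j - 1) t -
          τ * a * SI j t * (∑ i ∈ Finset.Icc 1 K, SI i t) / S t) (Set.Ici 0) t)
    (hSR : ∀ t ≥ (0 : ℝ),
      HasDerivWithinAt SR
        (-(τ * a * SR t * (∑ i ∈ Finset.Icc 1 K, SI i t) / S t) + (K : ℝ) * γ * SI K t)
        (Set.Ici 0) t) :
    (∀ t ≥ (0 : ℝ),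
      HasDerivWithinAt (fun u => (∑ i ∈ Finset.Icc 1 K, SI i u) / S u ^ a)
        (-τ * ((∑ i ∈ Finset.Icc 1 K, SI i t) / S t ^ a) -
          (K : ℝ) * γ * (SI K t / S t ^ a) +
          a * τ * (SS t / S t) * ((∑ i ∈ Finset.Icc 1 K, SI i t) / S t ^ a))
        (Set.Ici 0) t) ∧
    (∀ t ≥ (0 : ℝ),
      HasDerivWithinAt (fun u => SR u / S u ^ a)
        ((K : ℝ) * γ * (SI K t / S t ^ a)) (Set.Ici 0) t) :=
  pairwise_F_G_equations_general τ γ a K hK S SS SR SI hSpos hS hSI1 hSIj hSR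
end

section
/- Consider the closed pairwise SI^KR model with parameters τ, γ > 0, integer K ≥ 1, real n > 1, a = (n−1)/n, given by differentiable functions S, SS, SI₁, …, SI_K : [0,∞) → ℝ with S(t) > 0 and SS(t) > 0 satisfying S′ = −τ Σᵢ SIᵢ and SS′ = −2τa·SS·(Σᵢ SIᵢ)/S. Then the quantity L(t) = SS(t)/( exp(n·S(t)^{1/n}) · S(t)^{2a} ) satisfies, for all t ≥ 0, L′(t) = τ·F(t)·L(t), where F(t) = (Σᵢ SIᵢ(t))/S(t)^a; equivalently, (d/dt) log L(t) = τ·F(t). -/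
/-!
Taking logarithms, `log L = log SS - n S^{1/n} - 2a log S`, so
`(log L)' = SS'/SS - (S^{1/n-1} + 2a/S) S'`. Since `a = 1 - 1/n` we have `S^{1/n-1} = S^{-a}`, and
substituting the two model equations the `2aτ(Σ SIᵢ)/S` terms cancel, leaving `τ (Σ SIᵢ)/S^a`.
The equation for `L` itself follows from `L = exp (log L)`.
-/

open Finset Set Real

lemma Real.log_div_exp_mul_rpow {x y : ℝ} (n a : ℝ) (hx : 0 < x) (hy : 0 < y) :
    log (y / (exp (n * x ^ (1 / n)) * x ^ (2 * a))) = log y - n * x ^ (1 / n) - 2 * a * log x := by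
  rw [log_div hy.ne' (by positivity), log_mul (exp_pos _).ne' (by positivity), log_exp,
    log_rpow hx]
  ring

section

variable {f x y : ℝ → ℝ} {g x' y' t : ℝ} {s : Set ℝ}

lemma HasDerivWithinAt.of_log (h : HasDerivWithinAt (fun u => Real.log (f u)) g s t)
    (hf : ∀ u ∈ s, 0 < f u) (ht : t ∈ s) : HasDerivWithinAt f (g * f t) s t := by
  have hexp := h.exp
  rw [exp_log (hf t ht), mul_comm] at hexp
  exact hexp.congr (fun u hu => (exp_log (hf u hu)).symm) (exp_log (hf t ht)).symm

lemma HasDerivWithinAt.log_div_exp_mul_rpow (n a : ℝ) (hx : HasDerivWithinAt x x' s t)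
    (hy : HasDerivWithinAt y y' s t) (hxpos : ∀ u ∈ s, 0 < x u) (hypos : ∀ u ∈ s, 0 < y u)
    (ht : t ∈ s) :
    HasDerivWithinAt (fun u => Real.log (y u / (Real.exp (n * x u ^ (1 / n)) * x u ^ (2 * a))))
      (y' / y t - n * (x' * (1 / n) * x t ^ (1 / n - 1)) - 2 * a * (x' / x t)) s t := by
  have hsum := ((hy.log (hypos t ht).ne').sub
    ((hx.rpow_const (p := 1 / n) (Or.inl (hxpos t ht).ne')).const_mul n)).sub
    ((hx.log (hxpos t ht).ne').const_mul (2 * a))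
  exact hsum.congr (fun u hu => Real.log_div_exp_mul_rpow n a (hxpos u hu) (hypos u hu))
    (Real.log_div_exp_mul_rpow n a (hxpos t ht) (hypos t ht))

end

lemma rpow_one_div_sub_one {x n : ℝ} (hx : 0 < x) (hn : n ≠ 0) :
    x ^ (1 / n - 1) = (x ^ ((n - 1) / n))⁻¹ := by
  rw [← rpow_neg hx.le]
  congr 1
  field_simp
  ring

lemma pairwise_log_rate {τ σ n S SS : ℝ} (hn : n ≠ 0) (hS : 0 < S) (hSS : SS ≠ 0) :
    -(2 * τ * ((n - 1) / n) * SS * σ / S) / SS - n * (-(τ * σ) * (1 / n) * S ^ (1 / n - 1))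
      - 2 * ((n - 1) / n) * (-(τ * σ) / S) = τ * (σ / S ^ ((n - 1) / n)) := by
  rw [rpow_one_div_sub_one hS hn]
  have : 0 < S ^ ((n - 1) / n) := rpow_pos_of_pos hS _
  field_simp
  ring

theorem pairwise_L_equation_general (τ n a : ℝ) (hn : 1 < n)
    (ha : a = (n - 1) / n) (K : ℕ)
    (S SS : ℝ → ℝ) (SI : ℕ → ℝ → ℝ)
    (hSpos : ∀ t ≥ (0 : ℝ), 0 < S t)
    (hSSpos : ∀ t ≥ (0 : ℝ), 0 < SS t)
    (hS : ∀ t ≥ (0 : ℝ),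
      HasDerivWithinAt S (-(τ * ∑ i ∈ Finset.Icc 1 K, SI i t)) (Set.Ici 0) t)
    (hSS : ∀ t ≥ (0 : ℝ),
      HasDerivWithinAt SS
        (-(2 * τ * a * SS t * (∑ i ∈ Finset.Icc 1 K, SI i t) / S t)) (Set.Ici 0) t) :
    (∀ t ≥ (0 : ℝ),
      HasDerivWithinAt (fun u => SS u / (Real.exp (n * S u ^ (1 / n)) * S u ^ (2 * a)))
        (τ * ((∑ i ∈ Finset.Icc 1 K, SI i t) / S t ^ a) *
          (SS t / (Real.exp (n * S t ^ (1 / n)) * S t ^ (2 * a))))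
        (Set.Ici 0) t) ∧
    (∀ t ≥ (0 : ℝ),
      HasDerivWithinAt
        (fun u => Real.log (SS u / (Real.exp (n * S u ^ (1 / n)) * S u ^ (2 * a))))
        (τ * ((∑ i ∈ Finset.Icc 1 K, SI i t) / S t ^ a)) (Set.Ici 0) t) := by
  subst ha
  have hlog : ∀ t ≥ (0 : ℝ), HasDerivWithinAt
      (fun u => log (SS u / (exp (n * S u ^ (1 / n)) * S u ^ (2 * ((n - 1) / n)))))
      (τ * ((∑ i ∈ Icc 1 K, SI i t) / S t ^ ((n - 1) / n))) (Ici 0) t := fun t ht => by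
    rw [← pairwise_log_rate (by positivity) (hSpos t ht) (hSSpos t ht).ne']
    exact (hS t ht).log_div_exp_mul_rpow n _ (hSS t ht) hSpos hSSpos ht
  have hLpos : ∀ u ∈ Ici (0 : ℝ),
      0 < SS u / (exp (n * S u ^ (1 / n)) * S u ^ (2 * ((n - 1) / n))) := fun u hu => by
    have := hSpos u hu
    have := hSSpos u hu
    positivity
  exact ⟨fun t ht => (hlog t ht).of_log hLpos ht, hlog⟩

/-- In the closed pairwise SI^K R model, the quantity
`L = SS / (exp (n S^{1/n}) S^{2a})` satisfies `L' = τ F L`, where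
`F = (Σᵢ SIᵢ)/S^a`; equivalently `(log L)' = τ F`. -/
theorem pairwise_L_equation (τ γ n a : ℝ) (hτ : 0 < τ) (hγ : 0 < γ) (hn : 1 < n)
    (ha : a = (n - 1) / n) (K : ℕ) (hK : 1 ≤ K)
    (S SS : ℝ → ℝ) (SI : ℕ → ℝ → ℝ)
    (hSpos : ∀ t ≥ (0 : ℝ), 0 < S t)
    (hSSpos : ∀ t ≥ (0 : ℝ), 0 < SS t)
    (hS : ∀ t ≥ (0 : ℝ),
      HasDerivWithinAt S (-(τ * ∑ i ∈ Finset.Icc 1 K, SI i t)) (Set.Ici 0) t)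
    (hSS : ∀ t ≥ (0 : ℝ),
      HasDerivWithinAt SS
        (-(2 * τ * a * SS t * (∑ i ∈ Finset.Icc 1 K, SI i t) / S t)) (Set.Ici 0) t) :
    (∀ t ≥ (0 : ℝ),
      HasDerivWithinAt (fun u => SS u / (Real.exp (n * S u ^ (1 / n)) * S u ^ (2 * a)))
        (τ * ((∑ i ∈ Finset.Icc 1 K, SI i t) / S t ^ a) *
          (SS t / (Real.exp (n * S t ^ (1 / n)) * S t ^ (2 * a))))
        (Set.Ici 0) t) ∧
    (∀ t ≥ (0 : ℝ),
      HasDerivWithinAt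
        (fun u => Real.log (SS u / (Real.exp (n * S u ^ (1 / n)) * S u ^ (2 * a))))
        (τ * ((∑ i ∈ Finset.Icc 1 K, SI i t) / S t ^ a)) (Set.Ici 0) t) :=
  pairwise_L_equation_general τ n a hn ha K S SS SI hSpos hSSpos hS hSS
end

section
/- Consider the closed pairwise SI^KR model with parameters τ, γ > 0, integer K ≥ 1, real n > 1, a = (n−1)/n, given by differentiable functions S, SS, SI₁, …, SI_K, SR : [0,∞) → ℝ with S(t) > 0 satisfying S′ = −τ Σᵢ SIᵢ, SS′ = −2τa·SS·(Σᵢ SIᵢ)/S, SI₁′ = −(τ+Kγ)SI₁ + τa(SS − SI₁)(Σᵢ SIᵢ)/S, SIⱼ′ = −(τ+Kγ)SIⱼ + Kγ·SI_{j−1} − τa·SIⱼ·(Σᵢ SIᵢ)/S for j = 2, …, K, and SR′ = −τa·SR·(Σᵢ SIᵢ)/S + Kγ·SI_K. Assume SIᵢ(0) = 0 for all i, SR(0) = 0, each SIᵢ(t)/S(t)^a is integrable on [0,∞) and tends to 0 as t → ∞, t ↦ SS(t)(Σᵢ SIᵢ(t))/S(t)^{1+a} is integrable on [0,∞), S(t)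 → S_∞ > 0, SS(t) → SS_∞, and SR(t) → SR_∞ as t → ∞. Then SR_∞ / S_∞^a = (1 − τ̃) · ( SS(0)/S(0)^a − SS_∞/S_∞^a ), where τ̃ = 1 − (Kγ/(τ + Kγ))^K. -/
/-!
Scale every pair variable by the integrating factor `S^{-a}`: since `S' = -τ Q` with
`Q = Σᵢ SIᵢ`, the closure terms `-τ a X Q / S` cancel, and `M = SS/S^a`, `Pᵢ = SIᵢ/S^a`,
`N = SR/S^a` satisfy the linear system `M' = -τ a W`, `P₁' = -(τ+Kγ) P₁ + τ a W`,
`Pⱼ' = -(τ+Kγ) Pⱼ + Kγ Pⱼ₋₁`, `N' = Kγ P_K` with `W = SS Q / S^{1+a}`.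
Integrating over `[0, ∞)` with `Pᵢ(0) = Pᵢ(∞) = 0` gives
`(τ+Kγ) ∫P₁ = τ a ∫W = M(0) - M(∞)`, `(τ+Kγ) ∫Pⱼ₊₁ = Kγ ∫Pⱼ` and `N(∞) = Kγ ∫P_K`,
so `N(∞) = (Kγ/(τ+Kγ))^K (M(0) - M(∞))`.
-/

set_option autoImplicit false

open Set MeasureTheory Filter Topology

theorem hasDerivWithinAt_div_rpow {X S : ℝ → ℝ} {X' S' a t : ℝ} {s : Set ℝ}
    (hX : HasDerivWithinAt X X' s t) (hS : HasDerivWithinAt S S' s t) (hpos : 0 < S t) :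
    HasDerivWithinAt (fun u => X u / S u ^ a) ((X' - a * X t * S' / S t) / S t ^ a) s t := by
  have hSa : HasDerivWithinAt (fun u => S u ^ a) (a * S t ^ (a - 1) * S') s t :=
    (Real.hasDerivAt_rpow_const (Or.inl hpos.ne')).comp_hasDerivWithinAt t hS
  refine (hX.div hSa (Real.rpow_pos_of_pos hpos a).ne').congr_deriv ?_
  rw [Real.rpow_sub hpos, Real.rpow_one]
  field_simp

theorem tendsto_div_rpow {X S : ℝ → ℝ} {l : Filter ℝ} {x s a : ℝ}
    (hX : Tendsto X l (𝓝 x)) (hS : Tendsto S l (𝓝 s)) (hs : 0 < s) :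
    Tendsto (fun t => X t / S t ^ a) l (𝓝 (x / s ^ a)) :=
  hX.div (hS.rpow_const (Or.inl hs.ne')) (Real.rpow_pos_of_pos hs a).ne'

theorem integral_Ioi_eq_sub_of_hasDerivWithinAt_div_rpow {S S' X f : ℝ → ℝ} {a m t₀ : ℝ}
    (hpos : ∀ t ≥ t₀, 0 < S t) (hS : ∀ t ≥ t₀, HasDerivWithinAt S (S' t) (Ici t₀) t)
    (hX : ∀ t ≥ t₀, HasDerivWithinAt X (S t ^ a * f t + a * X t * S' t / S t) (Ici t₀) t)
    (hf : IntegrableOn f (Ioi t₀)) (hlim : Tendsto (fun t => X t / S t ^ a) atTop (𝓝 m)) :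
    ∫ t in Ioi t₀, f t = m - X t₀ / S t₀ ^ a := by
  have hderiv : ∀ t ≥ t₀, HasDerivWithinAt (fun u => X u / S u ^ a) (f t) (Ici t₀) t := by
    intro t ht
    refine (hasDerivWithinAt_div_rpow (hX t ht) (hS t ht) (hpos t ht)).congr_deriv ?_
    have := (Real.rpow_pos_of_pos (hpos t ht) a).ne'
    field_simp
    ring
  exact integral_Ioi_of_hasDerivAt_of_tendsto (hderiv t₀ le_rfl).continuousWithinAt
    (fun t ht => (hderiv t ht.out.le).hasDerivAt (Ici_mem_nhds ht)) hf hlim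

theorem mul_eq_div_pow_mul_of_chain {𝕜 : Type*} [Field 𝕜] {x : ℕ → 𝕜} {b c D : 𝕜} {K : ℕ}
    (hb : b ≠ 0) (h₁ : b * x 1 = D) (hstep : ∀ j, 1 ≤ j → j < K → b * x (j + 1) = c * x j) :
    ∀ j, 1 ≤ j → j ≤ K → c * x j = (c / b) ^ j * D := by
  intro j hj
  induction j, hj using Nat.le_induction with
  | base => intro; rw [← h₁]; field_simp
  | succ j hj ih =>
    intro hjK
    rw [pow_succ', mul_assoc, ← ih (Nat.le_of_succ_le hjK), ← hstep j hj hjK]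
    field_simp

section ScaledPairs

variable {τ a κ ρ m : ℝ} {S Q SS X Y : ℝ → ℝ}

theorem integral_scaled_SS (hpos : ∀ t ≥ 0, 0 < S t)
    (hS : ∀ t ≥ 0, HasDerivWithinAt S (-(τ * Q t)) (Ici 0) t)
    (hSS : ∀ t ≥ 0, HasDerivWithinAt SS (-(2 * τ * a * SS t * Q t / S t)) (Ici 0) t)
    (hW : IntegrableOn (fun t => SS t * Q t / S t ^ (1 + a)) (Ici 0))
    (hlim : Tendsto (fun t => SS t / S t ^ a) atTop (𝓝 m)) :
    τ * a * ∫ t in Ioi 0, SS t * Q t / S t ^ (1 + a) = SS 0 / S 0 ^ a - m := by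
  have h := integral_Ioi_eq_sub_of_hasDerivWithinAt_div_rpow hpos hS
    (f := fun t => -(τ * a) * (SS t * Q t / S t ^ (1 + a)))
    (fun t ht => (hSS t ht).congr_deriv (by
      have := (Real.rpow_pos_of_pos (hpos t ht) a).ne'
      rw [Real.rpow_add (hpos t ht), Real.rpow_one]
      field_simp
      ring))
    ((hW.mono_set Ioi_subset_Ici_self).const_mul _) hlim
  rw [integral_const_mul] at h
  linarith

theorem integral_scaled_SI_one (hpos : ∀ t ≥ 0, 0 < S t)
    (hS : ∀ t ≥ 0, HasDerivWithinAt S (-(τ * Q t)) (Ici 0) t)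
    (hX : ∀ t ≥ 0, HasDerivWithinAt X
      (-κ * X t + τ * a * (SS t - X t) * Q t / S t) (Ici 0) t)
    (hX0 : X 0 = 0) (hXint : IntegrableOn (fun t => X t / S t ^ a) (Ici 0))
    (hXlim : Tendsto (fun t => X t / S t ^ a) atTop (𝓝 0))
    (hW : IntegrableOn (fun t => SS t * Q t / S t ^ (1 + a)) (Ici 0)) :
    κ * ∫ t in Ioi 0, X t / S t ^ a = τ * a * ∫ t in Ioi 0, SS t * Q t / S t ^ (1 + a) := by
  have hXint' := (hXint.mono_set Ioi_subset_Ici_self).const_mul (-κ)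
  have hW' := (hW.mono_set Ioi_subset_Ici_self).const_mul (τ * a)
  have h := integral_Ioi_eq_sub_of_hasDerivWithinAt_div_rpow hpos hS
    (f := fun t => -κ * (X t / S t ^ a) + τ * a * (SS t * Q t / S t ^ (1 + a)))
    (fun t ht => (hX t ht).congr_deriv (by
      have := (Real.rpow_pos_of_pos (hpos t ht) a).ne'
      rw [Real.rpow_add (hpos t ht), Real.rpow_one]
      field_simp
      ring))
    (hXint'.add hW') hXlim
  rw [integral_add hXint' hW', integral_const_mul, integral_const_mul, hX0, zero_div] at h
  linarith

theorem integral_scaled_SI_succ (hpos : ∀ t ≥ 0, 0 < S t)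
    (hS : ∀ t ≥ 0, HasDerivWithinAt S (-(τ * Q t)) (Ici 0) t)
    (hX : ∀ t ≥ 0, HasDerivWithinAt X
      (-κ * X t + ρ * Y t - τ * a * X t * Q t / S t) (Ici 0) t)
    (hX0 : X 0 = 0) (hXint : IntegrableOn (fun t => X t / S t ^ a) (Ici 0))
    (hXlim : Tendsto (fun t => X t / S t ^ a) atTop (𝓝 0))
    (hYint : IntegrableOn (fun t => Y t / S t ^ a) (Ici 0)) :
    κ * ∫ t in Ioi 0, X t / S t ^ a = ρ * ∫ t in Ioi 0, Y t / S t ^ a := by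
  have hXint' := (hXint.mono_set Ioi_subset_Ici_self).const_mul (-κ)
  have hYint' := (hYint.mono_set Ioi_subset_Ici_self).const_mul ρ
  have h := integral_Ioi_eq_sub_of_hasDerivWithinAt_div_rpow hpos hS
    (f := fun t => -κ * (X t / S t ^ a) + ρ * (Y t / S t ^ a))
    (fun t ht => (hX t ht).congr_deriv (by
      have := (Real.rpow_pos_of_pos (hpos t ht) a).ne'
      field_simp
      ring))
    (hXint'.add hYint') hXlim
  rw [integral_add hXint' hYint', integral_const_mul, integral_const_mul, hX0, zero_div] at h
  linarith

theorem integral_scaled_SR (hpos : ∀ t ≥ 0, 0 < S t)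
    (hS : ∀ t ≥ 0, HasDerivWithinAt S (-(τ * Q t)) (Ici 0) t)
    (hX : ∀ t ≥ 0, HasDerivWithinAt X (-(τ * a * X t * Q t / S t) + ρ * Y t) (Ici 0) t)
    (hX0 : X 0 = 0) (hYint : IntegrableOn (fun t => Y t / S t ^ a) (Ici 0))
    (hXlim : Tendsto (fun t => X t / S t ^ a) atTop (𝓝 m)) :
    ρ * ∫ t in Ioi 0, Y t / S t ^ a = m := by
  have h := integral_Ioi_eq_sub_of_hasDerivWithinAt_div_rpow hpos hS
    (f := fun t => ρ * (Y t / S t ^ a))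
    (fun t ht => (hX t ht).congr_deriv (by
      have := (Real.rpow_pos_of_pos (hpos t ht) a).ne'
      field_simp
      ring))
    ((hYint.mono_set Ioi_subset_Ici_self).const_mul ρ) hXlim
  rwa [integral_const_mul, hX0, zero_div, sub_zero] at h

end ScaledPairs

theorem pairwise_SR_infinity_general (τ γ a : ℝ) (hτ : 0 < τ) (hγ : 0 < γ)
    (K : ℕ) (hK : 1 ≤ K)
    (S SS SR : ℝ → ℝ) (SI : ℕ → ℝ → ℝ)
    (Sinf SSinf SRinf : ℝ)
    (hSpos : ∀ t ≥ (0 : ℝ), 0 < S t)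
    (hS : ∀ t ≥ (0 : ℝ),
      HasDerivWithinAt S (-(τ * ∑ i ∈ Finset.Icc 1 K, SI i t)) (Set.Ici 0) t)
    (hSS : ∀ t ≥ (0 : ℝ),
      HasDerivWithinAt SS
        (-(2 * τ * a * SS t * (∑ i ∈ Finset.Icc 1 K, SI i t) / S t)) (Set.Ici 0) t)
    (hSI1 : ∀ t ≥ (0 : ℝ),
      HasDerivWithinAt (SI 1)
        (-(τ + (K : ℝ) * γ) * SI 1 t +
          τ * a * (SS t - SI 1 t) * (∑ i ∈ Finset.Icc 1 K, SI i t) / S t) (Set.Ici 0) t)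
    (hSIj : ∀ j, 2 ≤ j → j ≤ K → ∀ t ≥ (0 : ℝ),
      HasDerivWithinAt (SI j)
        (-(τ + (K : ℝ) * γ) * SI j t + (K : ℝ) * γ * SI (j - 1) t -
          τ * a * SI j t * (∑ i ∈ Finset.Icc 1 K, SI i t) / S t) (Set.Ici 0) t)
    (hSR : ∀ t ≥ (0 : ℝ),
      HasDerivWithinAt SR
        (-(τ * a * SR t * (∑ i ∈ Finset.Icc 1 K, SI i t) / S t) + (K : ℝ) * γ * SI K t)
        (Set.Ici 0) t)
    (hSI0 : ∀ i, 1 ≤ i → i ≤ K → SI i 0 = 0)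
    (hSR0 : SR 0 = 0)
    (hPint : ∀ i, 1 ≤ i → i ≤ K →
      IntegrableOn (fun t => SI i t / S t ^ a) (Set.Ici 0))
    (hPlim : ∀ i, 1 ≤ i → i ≤ K →
      Tendsto (fun t => SI i t / S t ^ a) atTop (nhds 0))
    (hWint : IntegrableOn
      (fun t => SS t * (∑ i ∈ Finset.Icc 1 K, SI i t) / S t ^ (1 + a)) (Set.Ici 0))
    (hSlim : Tendsto S atTop (nhds Sinf)) (hSinf : 0 < Sinf)
    (hSSlim : Tendsto SS atTop (nhds SSinf))
    (hSRlim : Tendsto SR atTop (nhds SRinf)) :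
    SRinf / Sinf ^ a =
      (1 - (1 - (((K : ℝ) * γ) / (τ + (K : ℝ) * γ)) ^ K)) *
        (SS 0 / S 0 ^ a - SSinf / Sinf ^ a) := by
  have hM := integral_scaled_SS hSpos hS hSS hWint (tendsto_div_rpow hSSlim hSlim hSinf)
  have hP₁ := integral_scaled_SI_one hSpos hS hSI1 (hSI0 1 le_rfl hK) (hPint 1 le_rfl hK)
    (hPlim 1 le_rfl hK) hWint
  have hPsucc : ∀ j, 1 ≤ j → j < K → (τ + K * γ) * ∫ t in Ioi 0, SI (j + 1) t / S t ^ a =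
      K * γ * ∫ t in Ioi 0, SI j t / S t ^ a := fun j hj hjK =>
    integral_scaled_SI_succ hSpos hS (hSIj (j + 1) (by omega) hjK) (hSI0 _ (by omega) hjK)
      (hPint _ (by omega) hjK) (hPlim _ (by omega) hjK) (hPint j hj hjK.le)
  have hN := integral_scaled_SR hSpos hS hSR hSR0 (hPint K hK le_rfl)
    (tendsto_div_rpow hSRlim hSlim hSinf)
  have hchain := mul_eq_div_pow_mul_of_chain (x := fun i => ∫ t in Ioi 0, SI i t / S t ^ a)
    (by positivity) (hP₁.trans hM) hPsucc K hK le_rfl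
  rw [sub_sub_cancel, ← hN, hchain]

/-- Final value of the scaled susceptible–recovered pairs in the closed pairwise
SI^K R model: with `τ̃ = 1 - (Kγ/(τ+Kγ))^K`, burn-out of the epidemic gives
`SR_∞ / S_∞^a = (1 - τ̃) (SS(0)/S(0)^a - SS_∞/S_∞^a)`. -/
theorem pairwise_SR_infinity (τ γ n a : ℝ) (hτ : 0 < τ) (hγ : 0 < γ) (hn : 1 < n)
    (ha : a = (n - 1) / n) (K : ℕ) (hK : 1 ≤ K)
    (S SS SR : ℝ → ℝ) (SI : ℕ → ℝ → ℝ)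
    (Sinf SSinf SRinf : ℝ)
    (hSpos : ∀ t ≥ (0 : ℝ), 0 < S t)
    (hS : ∀ t ≥ (0 : ℝ),
      HasDerivWithinAt S (-(τ * ∑ i ∈ Finset.Icc 1 K, SI i t)) (Set.Ici 0) t)
    (hSS : ∀ t ≥ (0 : ℝ),
      HasDerivWithinAt SS
        (-(2 * τ * a * SS t * (∑ i ∈ Finset.Icc 1 K, SI i t) / S t)) (Set.Ici 0) t)
    (hSI1 : ∀ t ≥ (0 : ℝ),
      HasDerivWithinAt (SI 1)
        (-(τ + (K : ℝ) * γ) * SI 1 t +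
          τ * a * (SS t - SI 1 t) * (∑ i ∈ Finset.Icc 1 K, SI i t) / S t) (Set.Ici 0) t)
    (hSIj : ∀ j, 2 ≤ j → j ≤ K → ∀ t ≥ (0 : ℝ),
      HasDerivWithinAt (SI j)
        (-(τ + (K : ℝ) * γ) * SI j t + (K : ℝ) * γ * SI (j - 1) t -
          τ * a * SI j t * (∑ i ∈ Finset.Icc 1 K, SI i t) / S t) (Set.Ici 0) t)
    (hSR : ∀ t ≥ (0 : ℝ),
      HasDerivWithinAt SR
        (-(τ * a * SR t * (∑ i ∈ Finset.Icc 1 K, SI i t) / S t) + (K : ℝ) * γ * SI K t)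
        (Set.Ici 0) t)
    (hSI0 : ∀ i, 1 ≤ i → i ≤ K → SI i 0 = 0)
    (hSR0 : SR 0 = 0)
    (hPint : ∀ i, 1 ≤ i → i ≤ K →
      IntegrableOn (fun t => SI i t / S t ^ a) (Set.Ici 0))
    (hPlim : ∀ i, 1 ≤ i → i ≤ K →
      Tendsto (fun t => SI i t / S t ^ a) atTop (nhds 0))
    (hWint : IntegrableOn
      (fun t => SS t * (∑ i ∈ Finset.Icc 1 K, SI i t) / S t ^ (1 + a)) (Set.Ici 0))
    (hSlim : Tendsto S atTop (nhds Sinf)) (hSinf : 0 < Sinf)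
    (hSSlim : Tendsto SS atTop (nhds SSinf))
    (hSRlim : Tendsto SR atTop (nhds SRinf)) :
    SRinf / Sinf ^ a =
      (1 - (1 - (((K : ℝ) * γ) / (τ + (K : ℝ) * γ)) ^ K)) *
        (SS 0 / S 0 ^ a - SSinf / Sinf ^ a) :=
  pairwise_SR_infinity_general τ γ a hτ hγ K hK S SS SR SI Sinf SSinf SRinf hSpos hS hSS hSI1 hSIj
    hSR hSI0 hSR0 hPint hPlim hWint hSlim hSinf hSSlim hSRlim
end
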